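/- arXiv:2001.06297 — 5 statements merged into one kernel-verified Lean document; each statement's English description precedes it below -/
import Mathlib

section
/- Let H be a Hilbert space, (bᵗ)_{t∈I} a family of continuous bilinear forms on H such that t ↦ bᵗ is weakly differentiable with derivative ḃᵗ (i.e. ḃᵗ(u,v) = lim_{h→0}(b^{t+h}(u,v)−bᵗ(u,v))/h for all u,v), the family (ḃᵗ) is equicontinuous (|ḃᵗ(u,v)| ≤ C‖u‖‖v‖ uniformly in t), and t ↦ ḃᵗ is weakly continuous. Let t ↦ uᵗ ∈ H be norm-continuous and weakly differentiable with weak derivative u̇ᵗ. Then for each s ∈ I and v ∈ H, d/dt bᵗ(uᵗ,v)|_{t=s} = ḃˢ(uˢ,v) + bˢ(u̇ˢ,v). -/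
open Filter Topology Asymptotics

/-- Splitting `fₜ(uₜ) - fₛ(uₛ)` into the two partial increments and the cross term
`(fₜ - fₛ)(uₜ - uₛ)`, the Lipschitz bound makes the cross term `O(‖uₜ - uₛ‖ · |t - s|)`,
which is `o(t - s)` by continuity of `u`. -/
theorem hasDerivAt_apply_of_abs_sub_le {E : Type*} [NormedAddCommGroup E] [NormedSpace ℝ E]
    {f : ℝ → E →L[ℝ] ℝ} {u : ℝ → E} {s f' u' K : ℝ}
    (hf : HasDerivAt (fun t => f t (u s)) f' s)
    (hu : HasDerivAt (fun t => f s (u t)) u' s)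
    (hlip : ∀ᶠ t in 𝓝 s, ∀ w, |f t w - f s w| ≤ K * ‖w‖ * |t - s|)
    (hucont : ContinuousAt u s) :
    HasDerivAt (fun t => f t (u t)) (f' + u') s := by
  set cross : ℝ → ℝ := fun t => f t (u t - u s) - f s (u t - u s)
  have hcross_bigO : cross =O[𝓝 s] fun t => ‖u t - u s‖ * (t - s) := by
    refine IsBigO.of_bound |K| ?_
    filter_upwards [hlip] with t ht
    calc ‖cross t‖ ≤ K * ‖u t - u s‖ * |t - s| := ht _
      _ ≤ |K| * ‖‖u t - u s‖ * (t - s)‖ := by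
        rw [norm_mul, norm_norm, Real.norm_eq_abs, ← mul_assoc]
        gcongr
        exact le_abs_self K
  have hu_small : (fun t => ‖u t - u s‖) =o[𝓝 s] fun _ => (1 : ℝ) := by
    rw [isLittleO_one_iff]
    exact tendsto_iff_norm_sub_tendsto_zero.mp hucont
  have hcross : HasDerivAt cross 0 s := by
    rw [hasDerivAt_iff_isLittleO]
    simpa [cross] using hcross_bigO.trans_isLittleO (hu_small.mul_isBigO (isBigO_refl _ _))
  have hsum := ((hf.add hu).sub_const (f s (u s))).add hcross
  rw [add_zero] at hsum
  refine hsum.congr_of_eventuallyEq (Eventually.of_forall fun t => ?_)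
  simp only [Pi.add_apply, cross, map_sub]
  ring

theorem stmt_7_general {H : Type*} [NormedAddCommGroup H] [InnerProductSpace ℝ H]
    (I : Set ℝ) (hI : IsOpen I)
    (b bdot : ℝ → H →L[ℝ] H →L[ℝ] ℝ) (u udot : ℝ → H) (C : ℝ)
    (hbderiv : ∀ t ∈ I, ∀ w v : H, HasDerivAt (fun τ => b τ w v) (bdot t w v) t)
    (hequi : ∀ t ∈ I, ∀ w v : H, |bdot t w v| ≤ C * ‖w‖ * ‖v‖)
    (hucont : ContinuousOn u I)
    (huweak : ∀ t ∈ I, ∀ l : H →L[ℝ] ℝ, HasDerivAt (fun τ => l (u τ)) (l (udot t)) t) :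
    ∀ s ∈ I, ∀ v : H,
      HasDerivAt (fun t => b t (u t) v) (bdot s (u s) v + b s (udot s) v) s := by
  intro s hs v
  obtain ⟨ε, hε, hball⟩ := Metric.isOpen_iff.mp hI s hs
  have hlip : ∀ᶠ t in 𝓝 s, ∀ w, |(b t).flip v w - (b s).flip v w| ≤ C * ‖v‖ * ‖w‖ * |t - s| := by
    filter_upwards [Metric.ball_mem_nhds s hε] with t ht w
    have hmvt := (convex_ball s ε).norm_image_sub_le_of_norm_hasDerivWithin_le
      (fun τ hτ => (hbderiv τ (hball hτ) w v).hasDerivWithinAt)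
      (fun τ hτ => (Real.norm_eq_abs _).trans_le (hequi τ (hball hτ) w v))
      (Metric.mem_ball_self hε) ht
    simpa only [ContinuousLinearMap.flip_apply, Real.norm_eq_abs, mul_right_comm C] using hmvt
  simpa using hasDerivAt_apply_of_abs_sub_le (f := fun t => (b t).flip v)
    (by simpa using hbderiv s hs (u s) v) (huweak s hs ((b s).flip v)) hlip
    (hucont.continuousAt (hI.mem_nhds hs))

/-- Chain rule for parameter-dependent bilinear forms on a Hilbert space: if `t ↦ bᵗ` is
weakly differentiable with derivative `ḃᵗ`, `(ḃᵗ)` is equicontinuous and weakly continuous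
in `t`, and `t ↦ uᵗ` is norm-continuous and weakly differentiable with weak derivative `u̇ᵗ`,
then `d/dt bᵗ(uᵗ,v)|_{t=s} = ḃˢ(uˢ,v) + bˢ(u̇ˢ,v)` for every `s ∈ I` and `v ∈ H`. -/
theorem stmt_7 {H : Type*} [NormedAddCommGroup H] [InnerProductSpace ℝ H] [CompleteSpace H]
    (I : Set ℝ) (hI : IsOpen I)
    (b bdot : ℝ → H →L[ℝ] H →L[ℝ] ℝ) (u udot : ℝ → H) (C : ℝ)
    (hbderiv : ∀ t ∈ I, ∀ w v : H, HasDerivAt (fun τ => b τ w v) (bdot t w v) t)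
    (hequi : ∀ t ∈ I, ∀ w v : H, |bdot t w v| ≤ C * ‖w‖ * ‖v‖)
    (hbdotcont : ∀ w v : H, ContinuousOn (fun t => bdot t w v) I)
    (hucont : ContinuousOn u I)
    (huweak : ∀ t ∈ I, ∀ l : H →L[ℝ] ℝ, HasDerivAt (fun τ => l (u τ)) (l (udot t)) t) :
    ∀ s ∈ I, ∀ v : H,
      HasDerivAt (fun t => b t (u t) v) (bdot s (u s) v + b s (udot s) v) s :=
  stmt_7_general I hI b bdot u udot C hbderiv hequi hucont huweak
end

section
/- Let H be a Hilbert space, I an open interval, (lᵗ) ⊆ H' and (bᵗ) an equicoercive family of continuous bilinear forms on H. Assume: the weak derivatives l̇ᵗ ∈ H' exist and t ↦ l̇ᵗ is norm-continuous; the weak derivatives ḃᵗ exist, the family (ḃᵗ) is equicontinuous, and t ↦ ḃᵗ is norm-continuous (in the bilinear form norm). Let uᵗ solve bᵗ(uᵗ,v)=lᵗ(v) for all v ∈ H, and let qᵗ be the unique solution of bᵗ(qᵗ,v) = l̇ᵗ(v) − ḃᵗ(uᵗ,v) for all v ∈ H. Then t ↦ uᵗ is differentiable with respect to the strong (norm)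 topology on H and its derivative equals qᵗ for every t ∈ I; moreover t ↦ qᵗ is strongly continuous. -/
/-!
View `b t` as an operator `H → H'`; coercivity makes it bounded below by `Λ`, uniformly in `t`.
By the mean value theorem, weak derivatives that are norm-continuous in `t` are derivatives in
operator norm, so `l : ℝ → H'` and `b : ℝ → L(H, H')` are norm-differentiable. For the equation
`A s (x s) = f s` with `A s` bounded below by `Λ`,
`A t (x s - x t) = (f s - f t) - (A s - A t) (x s)` gives continuity of `x`, and
`A t (x s - x t - (s - t) • x') = (f s - f t - (s - t) • f') - (A s - A t - (s - t) • A') (x t)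
  - (A s - A t) (x s - x t)` is `o(s - t)` once `x` is continuous, which gives `x' = q t`.
Continuity of `q` is again continuity of a solution, with right-hand side `l̇ - ḃ u`.
-/

open Filter Topology Asymptotics Metric ContinuousLinearMap

section

variable {E F : Type*} [NormedAddCommGroup E] [NormedSpace ℝ E]
  [NormedAddCommGroup F] [NormedSpace ℝ F]

theorem mul_norm_le_norm_apply_of_coercive {Λ : ℝ} {B : E →L[ℝ] E →L[ℝ] ℝ}
    (hB : ∀ v, Λ * ‖v‖ ^ 2 ≤ B v v) (v : E) : Λ * ‖v‖ ≤ ‖B v‖ := by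
  rcases (norm_nonneg v).eq_or_lt with hv | hv
  · simp [← hv]
  refine le_of_mul_le_mul_right ?_ hv
  calc Λ * ‖v‖ * ‖v‖ = Λ * ‖v‖ ^ 2 := by ring
    _ ≤ B v v := hB v
    _ ≤ ‖B v v‖ := Real.le_norm_self _
    _ ≤ ‖B v‖ * ‖v‖ := (B v).le_opNorm v

theorem hasDerivAt_of_hasDerivAt_apply {f f' : ℝ → E →L[ℝ] F} {t : ℝ}
    (hf : ∀ᶠ τ in 𝓝 t, ∀ v, HasDerivAt (fun σ ↦ f σ v) (f' τ v) τ)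
    (hf' : ContinuousAt f' t) : HasDerivAt f (f' t) t := by
  rw [hasDerivAt_iff_isLittleO, isLittleO_iff]
  intro ε hε
  obtain ⟨δ, hδ, hball⟩ := eventually_nhds_iff_ball.1
    (hf.and (hf'.eventually (closedBall_mem_nhds (f' t) hε)))
  filter_upwards [ball_mem_nhds t hδ] with s hs
  refine opNorm_le_bound _ (by positivity) fun v ↦ ?_
  have hmvt := (convex_ball t δ).norm_image_sub_le_of_norm_hasDerivWithin_le
    (f := fun σ ↦ f σ v - σ • f' t v) (f' := fun σ ↦ f' σ v - f' t v) (C := ε * ‖v‖)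
    (fun σ hσ ↦ (((hball σ hσ).1 v).sub ((hasDerivAt_id σ).smul_const (f' t v))).hasDerivWithinAt
      |>.congr_deriv (by simp))
    (fun σ hσ ↦ by
      rw [← sub_apply]
      exact ((f' σ - f' t).le_opNorm v).trans
        (mul_le_mul_of_nonneg_right (mem_closedBall_iff_norm.1 (hball σ hσ).2) (norm_nonneg v)))
    (mem_ball_self hδ) hs
  calc ‖(f s - f t - (s - t) • f' t) v‖
      = ‖(f s v - s • f' t v) - (f t v - t • f' t v)‖ := by
        simp only [sub_apply, smul_apply, sub_smul]; congr 1; abel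
    _ ≤ ε * ‖v‖ * ‖s - t‖ := hmvt
    _ = ε * ‖s - t‖ * ‖v‖ := by ring

theorem continuousAt_of_apply_eq {X : Type*} [TopologicalSpace X] {Λ : ℝ} {A : X → E →L[ℝ] F}
    {f : X → F} {x : X → E} {t : X} (hΛ : 0 < Λ)
    (hA_below : ∀ᶠ s in 𝓝 t, ∀ v, Λ * ‖v‖ ≤ ‖A s v‖) (hA : ContinuousAt A t)
    (hf : ContinuousAt f t) (hx : ∀ᶠ s in 𝓝 t, A s (x s) = f s) : ContinuousAt x t := by
  have hAt : ∀ v, Λ * ‖v‖ ≤ ‖A t v‖ := hA_below.self_of_nhds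
  have hxt : A t (x t) = f t := hx.self_of_nhds
  rw [ContinuousAt, tendsto_iff_norm_sub_tendsto_zero]
  have hbound : ∀ᶠ s in 𝓝 t,
      ‖x s - x t‖ ≤ (‖f s - f t‖ + ‖A s - A t‖ * (‖f s‖ / Λ)) / Λ := by
    filter_upwards [hA_below, hx] with s hs hxs
    have hxs_le : ‖x s‖ ≤ ‖f s‖ / Λ := by
      rw [le_div_iff₀ hΛ, mul_comm, ← hxs]; exact hs (x s)
    have hdiff : A t (x s - x t) = (f s - f t) - (A s - A t) (x s) := by
      simp only [map_sub, sub_apply, hxs, hxt]; abel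
    rw [le_div_iff₀ hΛ, mul_comm]
    calc Λ * ‖x s - x t‖ ≤ ‖A t (x s - x t)‖ := hAt _
      _ ≤ ‖f s - f t‖ + ‖A s - A t‖ * ‖x s‖ := by
        rw [hdiff]; exact (norm_sub_le _ _).trans (by gcongr; exact le_opNorm _ _)
      _ ≤ ‖f s - f t‖ + ‖A s - A t‖ * (‖f s‖ / Λ) := by gcongr
  refine squeeze_zero' (Eventually.of_forall fun _ ↦ norm_nonneg _) hbound ?_
  have hlim := ((tendsto_iff_norm_sub_tendsto_zero.1 hf).add
    ((tendsto_iff_norm_sub_tendsto_zero.1 hA).mul (hf.norm.div_const Λ))).div_const Λ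
  simpa using hlim

theorem hasDerivAt_of_apply_eq {Λ : ℝ} {A : ℝ → E →L[ℝ] F} {f : ℝ → F} {x : ℝ → E}
    {A' : E →L[ℝ] F} {f' : F} {x' : E} {t : ℝ}
    (hΛ : 0 < Λ) (hA_below : ∀ v, Λ * ‖v‖ ≤ ‖A t v‖)
    (hA : HasDerivAt A A' t) (hf : HasDerivAt f f' t) (hx : ContinuousAt x t)
    (hAx : ∀ᶠ s in 𝓝 t, A s (x s) = f s) (hx' : A t x' = f' - A' (x t)) :
    HasDerivAt x x' t := by
  have hxt : A t (x t) = f t := hAx.self_of_nhds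
  have hquad : (fun s ↦ (A s - A t) (x s - x t)) =o[𝓝 t] fun s ↦ s - t := by
    have hx0 : (fun s ↦ x s - x t) =o[𝓝 t] fun _ ↦ (1 : ℝ) :=
      (isLittleO_one_iff ℝ).2 (tendsto_sub_nhds_zero_iff.2 hx)
    refine isBoundedBilinearMap_apply.isBigO_comp.trans_isLittleO ?_
    simpa using hA.isBigO_sub.norm_left.mul_isLittleO hx0.norm_left
  have hrem : (fun s ↦ A t (x s - x t - (s - t) • x')) =o[𝓝 t] fun s ↦ s - t := by
    refine (((hasDerivAt_iff_isLittleO.1 hf).sub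
      ((apply ℝ F (x t)).isBigO_comp _ _ |>.trans_isLittleO
        (hasDerivAt_iff_isLittleO.1 hA))).sub hquad).congr' ?_ EventuallyEq.rfl
    filter_upwards [hAx] with s hs
    simp only [map_sub, map_smul, sub_apply, apply_apply, hs, hxt, hx', smul_sub]
    abel
  refine hasDerivAt_iff_isLittleO.2 (IsBigO.trans_isLittleO ?_ hrem)
  refine IsBigO.of_bound Λ⁻¹ (Eventually.of_forall fun s ↦ ?_)
  rw [← div_eq_inv_mul, le_div_iff₀ hΛ, mul_comm]
  exact hA_below _

end

theorem stmt_8_general {H : Type*} [NormedAddCommGroup H] [InnerProductSpace ℝ H]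
    (I : Set ℝ) (hI : IsOpen I)
    (b bdot : ℝ → H →L[ℝ] H →L[ℝ] ℝ) (l ldot : ℝ → H →L[ℝ] ℝ)
    (u q : ℝ → H) (Λ : ℝ) (hΛ : 0 < Λ)
    (hcoer : ∀ t ∈ I, ∀ v : H, Λ * ‖v‖ ^ 2 ≤ b t v v)
    (hlderiv : ∀ t ∈ I, ∀ v : H, HasDerivAt (fun τ => l τ v) (ldot t v) t)
    (hldotcont : ContinuousOn ldot I)
    (hbderiv : ∀ t ∈ I, ∀ w v : H, HasDerivAt (fun τ => b τ w v) (bdot t w v) t)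
    (hbdotcont : ContinuousOn bdot I)
    (hu : ∀ t ∈ I, ∀ v : H, b t (u t) v = l t v)
    (hq : ∀ t ∈ I, ∀ v : H, b t (q t) v = ldot t v - bdot t (u t) v) :
    ContinuousOn u I ∧ (∀ t ∈ I, HasDerivAt u (q t) t) ∧ ContinuousOn q I := by
  have hnhds : ∀ t ∈ I, ∀ᶠ s in 𝓝 t, s ∈ I := fun t ht ↦ hI.mem_nhds ht
  have hldot : ∀ t ∈ I, ContinuousAt ldot t := fun t ht ↦ hldotcont.continuousAt (hI.mem_nhds ht)
  have hbdot : ∀ t ∈ I, ContinuousAt bdot t := fun t ht ↦ hbdotcont.continuousAt (hI.mem_nhds ht)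
  have hbelow : ∀ t ∈ I, ∀ᶠ s in 𝓝 t, ∀ v, Λ * ‖v‖ ≤ ‖b s v‖ := fun t ht ↦
    (hnhds t ht).mono fun s hs ↦ mul_norm_le_norm_apply_of_coercive (hcoer s hs)
  have hl : ∀ t ∈ I, HasDerivAt l (ldot t) t := fun t ht ↦
    hasDerivAt_of_hasDerivAt_apply ((hnhds t ht).mono hlderiv) (hldot t ht)
  have hbw : ∀ t ∈ I, ∀ w, HasDerivAt (fun τ ↦ b τ w) (bdot t w) t := fun t ht w ↦
    hasDerivAt_of_hasDerivAt_apply ((hnhds t ht).mono fun s hs ↦ hbderiv s hs w)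
      ((hbdot t ht).clm_apply continuousAt_const)
  have hb : ∀ t ∈ I, HasDerivAt b (bdot t) t := fun t ht ↦
    hasDerivAt_of_hasDerivAt_apply ((hnhds t ht).mono hbw) (hbdot t ht)
  have hbu : ∀ t ∈ I, b t (u t) = l t := fun t ht ↦ ext (hu t ht)
  have hbq : ∀ t ∈ I, b t (q t) = ldot t - bdot t (u t) := fun t ht ↦ ext (hq t ht)
  have hu_cont : ∀ t ∈ I, ContinuousAt u t := fun t ht ↦
    continuousAt_of_apply_eq hΛ (hbelow t ht) (hb t ht).continuousAt (hl t ht).continuousAt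
      ((hnhds t ht).mono hbu)
  refine ⟨fun t ht ↦ (hu_cont t ht).continuousWithinAt, fun t ht ↦ ?_,
    fun t ht ↦ ContinuousAt.continuousWithinAt ?_⟩
  · exact hasDerivAt_of_apply_eq hΛ (hbelow t ht).self_of_nhds (hb t ht) (hl t ht)
      (hu_cont t ht) ((hnhds t ht).mono hbu) (hbq t ht)
  · exact continuousAt_of_apply_eq hΛ (hbelow t ht) (hb t ht).continuousAt
      ((hldot t ht).sub ((hbdot t ht).clm_apply (hu_cont t ht))) ((hnhds t ht).mono hbq)

/-- Differentiability of the solution map in the strong topology: for an equicoercive family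
`(bᵗ)` of continuous bilinear forms on a Hilbert space with weak derivatives `ḃᵗ`
(equicontinuous, norm-continuous in `t`) and linear forms `lᵗ` with weak derivatives `l̇ᵗ`
(norm-continuous in `t`), if `uᵗ` solves `bᵗ(uᵗ,v)=lᵗ(v)` and `qᵗ` solves
`bᵗ(qᵗ,v)=l̇ᵗ(v)−ḃᵗ(uᵗ,v)`, then `t ↦ uᵗ` is strongly continuous and strongly differentiable
with derivative `qᵗ`, and `t ↦ qᵗ` is strongly continuous. -/
theorem stmt_8 {H : Type*} [NormedAddCommGroup H] [InnerProductSpace ℝ H] [CompleteSpace H]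
    (I : Set ℝ) (hI : IsOpen I)
    (b bdot : ℝ → H →L[ℝ] H →L[ℝ] ℝ) (l ldot : ℝ → H →L[ℝ] ℝ)
    (u q : ℝ → H) (Λ C : ℝ) (hΛ : 0 < Λ)
    (hcoer : ∀ t ∈ I, ∀ v : H, Λ * ‖v‖ ^ 2 ≤ b t v v)
    (hlderiv : ∀ t ∈ I, ∀ v : H, HasDerivAt (fun τ => l τ v) (ldot t v) t)
    (hldotcont : ContinuousOn ldot I)
    (hbderiv : ∀ t ∈ I, ∀ w v : H, HasDerivAt (fun τ => b τ w v) (bdot t w v) t)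
    (hequi : ∀ t ∈ I, ∀ w v : H, |bdot t w v| ≤ C * ‖w‖ * ‖v‖)
    (hbdotcont : ContinuousOn bdot I)
    (hu : ∀ t ∈ I, ∀ v : H, b t (u t) v = l t v)
    (hq : ∀ t ∈ I, ∀ v : H, b t (q t) v = ldot t v - bdot t (u t) v) :
    ContinuousOn u I ∧ (∀ t ∈ I, HasDerivAt u (q t) t) ∧ ContinuousOn q I :=
  stmt_8_general I hI b bdot l ldot u q Λ hΛ hcoer hlderiv hldotcont hbderiv hbdotcont hu hq
end

section
/- Let 𝒯₁ ≺ 𝒯₂ ≺ 𝒯₃ be three Hausdorff topologies on a set M (each finer than the previous), and let I ⊆ ℝ be an open interval. If U : I → M is continuous with respect to 𝒯₁, and the 𝒯₃-closure of U(I) is compact in 𝒯₂, then U is continuous with respect to 𝒯₂. -/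
/-- Topology comparison lemma: let `𝒯₁ ⊆ 𝒯₂ ⊆ 𝒯₃` be three Hausdorff topologies on a set
`M` and `I ⊆ ℝ` an open interval.  If `U : I → M` is continuous with respect to `𝒯₁`, and
the `𝒯₃`-closure of `U(I)` is compact in `𝒯₂`, then `U` is continuous with respect to `𝒯₂`.
(In Mathlib's order on `TopologicalSpace M`, `t₂ ≤ t₁` means `t₂` is finer than `t₁`.) -/
theorem stmt_9 {M : Type*} (t1 t2 t3 : TopologicalSpace M)
    (h12 : t2 ≤ t1) (h23 : t3 ≤ t2)
    (h1 : @T2Space M t1) (h2 : @T2Space M t2) (h3 : @T2Space M t3)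
    (I : Set ℝ) (hI : IsOpen I) (U : ℝ → M)
    (hU : @ContinuousOn ℝ M _ t1 U I)
    (hcomp : @IsCompact M t2 (@closure M t3 (U '' I))) :
    @ContinuousOn ℝ M _ t2 U I := by
  set K : Set M := @closure M t3 (U '' I) with hK
  have hsub : U '' I ⊆ K := by letI := t3; exact subset_closure
  -- restrict U to a map I → K
  rw [@continuousOn_iff_continuous_restrict ℝ M _ t1] at hU
  rw [@continuousOn_iff_continuous_restrict ℝ M _ t2]
  have hmem : ∀ x : I, I.restrict U x ∈ K := fun x =>
    hsub ⟨x, x.2, rfl⟩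
  letI tK1 : TopologicalSpace K := @instTopologicalSpaceSubtype M _ t1
  letI tK2 : TopologicalSpace K := @instTopologicalSpaceSubtype M _ t2
  have hf1 : @Continuous I K _ tK1 (fun x => (⟨I.restrict U x, hmem x⟩ : K)) :=
    by letI := t1; exact hU.subtype_mk hmem
  haveI : @CompactSpace K tK2 := by
    rw [← @isCompact_iff_compactSpace M t2 K]
    exact hcomp
  haveI : @T2Space K tK1 := by letI := t1; infer_instance
  -- identity (K, t2) → (K, t1) is continuous
  have hid : @Continuous K K tK2 tK1 id := by
    apply continuous_id_of_le
    exact induced_mono h12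
  -- it is a homeomorphism since domain compact, codomain T2
  let e : @Homeomorph K K tK2 tK1 :=
    @Continuous.homeoOfEquivCompactToT2 K K tK2 tK1 _ _ (Equiv.refl K) hid
  let es : @Homeomorph K K tK1 tK2 := @Homeomorph.symm K K tK2 tK1 e
  have hes : @Continuous K K tK1 tK2 es := @Homeomorph.continuous K K tK1 tK2 es
  have hf2 : @Continuous I K _ tK2 (fun x => (⟨I.restrict U x, hmem x⟩ : K)) :=
    @Continuous.comp I K K _ tK1 tK2 _ _ hes hf1
  have : @Continuous I M _ t2 (fun x => ((⟨I.restrict U x, hmem x⟩ : K) : M)) :=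
    @Continuous.comp I K M _ tK2 t2 _ _ (@continuous_subtype_val M t2 _) hf2
  exact this
end

section
/- Let X₃ ⊆ X₂ ⊆ X₁ be Banach spaces and u : I → X₃ a curve such that: (i) u is differentiable at each t ∈ I with respect to the (weak) topology of X₁ with derivative u̇ᵗ ∈ X₃; (ii) t ↦ u̇ᵗ is continuous with respect to the (weak) topology of X₁; (iii) the closure of {u̇ᵗ : t ∈ I} in X₃ is relatively compact in X₂. Then u is differentiable in the norm topology of X₂ with the same derivative u̇ᵗ, and t ↦ u̇ᵗ is continuous in the norm of X₂. -/
open Filter Topology intervalIntegral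

/-- On a set with compact closure behaviour, weak convergence (tested against functionals of a
larger space via an injective embedding) upgrades to norm convergence. -/
lemma tendsto_of_compact_of_weak {X₁ X₂ : Type*} [NormedAddCommGroup X₁] [NormedSpace ℝ X₁]
    [NormedAddCommGroup X₂] [NormedSpace ℝ X₂]
    (j21 : X₂ →L[ℝ] X₁) (h21 : Function.Injective j21)
    {K : Set X₂} (hK : IsCompact K) {α : Type*} {L : Filter α}
    {f : α → X₂} {v : X₂} (hfK : ∀ᶠ x in L, f x ∈ K)
    (h2 : ∀ l : X₁ →L[ℝ] ℝ, Tendsto (fun x => l (j21 (f x))) L (𝓝 (l (j21 v)))) :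
    Tendsto f L (𝓝 v) := by
  rw [Filter.Tendsto, le_iff_ultrafilter]
  intro U hU
  have hKU : K ∈ (U : Filter X₂) := hU (mem_map.mpr hfK)
  obtain ⟨w, hwK, hUw⟩ := hK.ultrafilter_le_nhds U (le_principal_iff.mpr hKU)
  have hwv : w = v := by
    apply h21
    rw [NormedSpace.eq_iff_forall_dual_eq ℝ]
    intro l
    refine tendsto_nhds_unique (f := fun x => l (j21 x)) (l := (U : Filter X₂)) ?_ ?_
    · exact ((l.comp j21).continuous.tendsto w).mono_left hUw
    · calc Filter.map (fun x => l (j21 x)) (U : Filter X₂)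
          ≤ Filter.map (fun x => l (j21 x)) (Filter.map f L) := map_mono hU
        _ = Filter.map (fun x => l (j21 (f x))) L := Filter.map_map
        _ ≤ 𝓝 (l (j21 v)) := h2 l
  exact hwv ▸ hUw

/-- Upgrading weak differentiability to strong differentiability via compact embeddings:
let `X₃ ⊆ X₂ ⊆ X₁` be Banach spaces (realized by injective continuous linear embeddings
`j32 : X₃ → X₂` and `j21 : X₂ → X₁`).  If the curve `u : I → X₃` is weakly differentiable
in `X₁` with derivative `u̇ᵗ ∈ X₃`, `t ↦ u̇ᵗ` is weakly continuous in `X₁`, and the image of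
the `X₃`-closure of `{u̇ᵗ : t ∈ I}` is relatively compact in `X₂`, then `u` is differentiable
in the norm of `X₂` with the same derivative, and `t ↦ u̇ᵗ` is norm-continuous in `X₂`. -/
theorem stmt_10 {X₁ X₂ X₃ : Type*}
    [NormedAddCommGroup X₁] [NormedSpace ℝ X₁] [CompleteSpace X₁]
    [NormedAddCommGroup X₂] [NormedSpace ℝ X₂] [CompleteSpace X₂]
    [NormedAddCommGroup X₃] [NormedSpace ℝ X₃] [CompleteSpace X₃]
    (j21 : X₂ →L[ℝ] X₁) (j32 : X₃ →L[ℝ] X₂)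
    (h21 : Function.Injective j21) (h32 : Function.Injective j32)
    (I : Set ℝ) (hI : IsOpen I) (u udot : ℝ → X₃)
    (hdiff : ∀ t ∈ I, ∀ l : X₁ →L[ℝ] ℝ,
      HasDerivAt (fun τ => l (j21 (j32 (u τ)))) (l (j21 (j32 (udot t)))) t)
    (hcont : ∀ l : X₁ →L[ℝ] ℝ, ContinuousOn (fun t => l (j21 (j32 (udot t)))) I)
    (hcomp : IsCompact (closure (j32 '' (closure (udot '' I))))) :
    (∀ t ∈ I, HasDerivAt (fun τ => j32 (u τ)) (j32 (udot t)) t) ∧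
    ContinuousOn (fun t => j32 (udot t)) I := by
  -- membership of values in the compact set
  have hmem : ∀ s ∈ I, j32 (udot s) ∈ closure (j32 '' (closure (udot '' I))) := by
    intro s hs
    exact subset_closure ⟨udot s, subset_closure ⟨s, hs, rfl⟩, rfl⟩
  -- norm continuity of the derivative in X₂
  have hc : ContinuousOn (fun t => j32 (udot t)) I := by
    intro t ht
    refine tendsto_of_compact_of_weak j21 h21 hcomp ?_ ?_
    · filter_upwards [self_mem_nhdsWithin] with s hs using hmem s hs
    · exact fun l => hcont l t ht
  refine ⟨?_, hc⟩
  intro t ht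
  obtain ⟨ε, hε, hball⟩ := Metric.isOpen_iff.mp hI t ht
  have hsub : ∀ τ ∈ Metric.ball t ε, Set.uIcc t τ ⊆ I := fun τ hτ =>
    ((convex_ball t ε).ordConnected.uIcc_subset (Metric.mem_ball_self hε) hτ).trans hball
  -- fundamental theorem of calculus identity in X₂
  have key : ∀ τ ∈ Metric.ball t ε,
      j32 (u τ) = j32 (u t) + ∫ s in t..τ, j32 (udot s) := by
    intro τ hτ
    have hint : IntervalIntegrable (fun s => j32 (udot s)) MeasureTheory.volume t τ :=
      (hc.mono (hsub τ hτ)).intervalIntegrable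
    apply h21
    rw [NormedSpace.eq_iff_forall_dual_eq ℝ]
    intro l
    have hftc : ∫ s in t..τ, l (j21 (j32 (udot s)))
        = l (j21 (j32 (u τ))) - l (j21 (j32 (u t))) := by
      refine integral_eq_sub_of_hasDerivAt (fun x hx => hdiff x (hsub τ hτ hx) l) ?_
      exact ((hcont l).mono (hsub τ hτ)).intervalIntegrable
    have hcomm : ∫ s in t..τ, (l.comp j21) (j32 (udot s))
        = (l.comp j21) (∫ s in t..τ, j32 (udot s)) :=
      (l.comp j21).intervalIntegral_comp_comm hint
    simp only [ContinuousLinearMap.comp_apply] at hcomm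
    rw [map_add, map_add, ← hcomm, hftc]
    ring
  -- differentiate the integral
  have hmeas : StronglyMeasurableAtFilter (fun s => j32 (udot s)) (𝓝 t)
      MeasureTheory.volume :=
    ContinuousOn.stronglyMeasurableAtFilter hI hc t ht
  have hca : ContinuousAt (fun s => j32 (udot s)) t := hc.continuousAt (hI.mem_nhds ht)
  have hF : HasDerivAt (fun τ => j32 (u t) + ∫ s in t..τ, j32 (udot s)) (j32 (udot t)) t :=
    (integral_hasDerivAt_right (IntervalIntegrable.refl) hmeas hca).const_add _
  refine hF.congr_of_eventuallyEq ?_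
  filter_upwards [Metric.ball_mem_nhds t hε] with τ hτ using key τ hτ
end

section
/- The map 𝓕^cer : ℝ^{3×3} → ℝ, σ ↦ ∫_{S²} ((max{0, nᵀσn})/σ_c)^m dS(n), with m > 1 and σ_c > 0, is continuously (Fréchet) differentiable, with derivative at σ₀ in direction M given by ∫_{S²} m·(max{0, nᵀσ₀n})^{m-1}·(nᵀMn)/σ_c^m dS(n); in particular the integrand derivative vanishes wherever nᵀσ₀n ≤ 0. -/
open MeasureTheory Real Set Metric Filter Topology
open scoped InnerProductSpace

/-! The integrand is `g (nᵀσn)` with `g x = (max 0 x / σc) ^ m`, which is `C¹` because `m > 1`,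
and `σ ↦ nᵀσn` is a continuous linear functional of norm at most `‖n‖² = 1`. So on a
neighbourhood of `σ₀` both the integrand and its derivative `g'(nᵀσn) · (M ↦ nᵀMn)` are
uniformly bounded, and dominated convergence gives differentiation under the integral sign and
continuity of the derivative. The only geometric input is that the unit sphere has finite
`2`-dimensional Hausdorff measure, being the image of a square under the smooth map of spherical
coordinates. -/

theorem IsCompact.hausdorffMeasure_image_lt_top_of_contDiff {E F : Type*}
    [NormedAddCommGroup E] [NormedSpace ℝ E] [FiniteDimensional ℝ E]
    [MeasurableSpace E] [BorelSpace E]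
    [NormedAddCommGroup F] [NormedSpace ℝ F] [MeasurableSpace F] [BorelSpace F]
    {f : E → F} (hf : ContDiff ℝ 1 f) {K : Set E} (hK : IsCompact K) :
    μH[Module.finrank ℝ E] (f '' K) < ⊤ := by
  obtain ⟨C, hC⟩ :=
    (hf.locallyLipschitz.locallyLipschitzOn (s := K)).exists_lipschitzOnWith_of_compact hK
  calc μH[Module.finrank ℝ E] (f '' K)
      ≤ (C : ENNReal) ^ (Module.finrank ℝ E : ℝ) * μH[Module.finrank ℝ E] K :=
        hC.hausdorffMeasure_image_le (Nat.cast_nonneg _)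
    _ < ⊤ := ENNReal.mul_lt_top (by simp) hK.measure_lt_top

noncomputable def sphericalCoords (p : ℝ × ℝ) : EuclideanSpace ℝ (Fin 3) :=
  !₂[cos p.1 * cos p.2, cos p.1 * sin p.2, sin p.1]

lemma contDiff_sphericalCoords : ContDiff ℝ 1 sphericalCoords := by
  refine contDiff_piLp' 2 fun i => ?_
  fin_cases i <;> simp [sphericalCoords] <;> fun_prop

lemma sphere_subset_image_sphericalCoords :
    sphere (0 : EuclideanSpace ℝ (Fin 3)) 1 ⊆
      sphericalCoords '' (Icc (-π) π ×ˢ Icc (-π) π) := by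
  intro n hn
  have hsum : n 0 ^ 2 + n 1 ^ 2 + n 2 ^ 2 = 1 := by
    simpa [Fin.sum_univ_three, mem_sphere_zero_iff_norm.mp hn] using
      (EuclideanSpace.real_norm_sq_eq n).symm
  have ht : |n 2| ≤ 1 := (sq_le_one_iff_abs_le_one _).1 (by nlinarith)
  -- latitude `arcsin (n 2)`, longitude the argument of `n 0 + i n 1`
  set z : ℂ := ⟨n 0, n 1⟩
  have hz : ‖z‖ = cos (arcsin (n 2)) := by
    rw [cos_arcsin, Complex.norm_def, Complex.normSq_mk]
    congr 1
    linarith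
  refine ⟨(arcsin (n 2), z.arg), ⟨⟨?_, ?_⟩, ?_, ?_⟩, ?_⟩
  · linarith [neg_pi_div_two_le_arcsin (n 2), pi_pos]
  · linarith [arcsin_le_pi_div_two (n 2), pi_pos]
  · exact (Complex.neg_pi_lt_arg z).le
  · exact Complex.arg_le_pi z
  · ext i
    fin_cases i
    · simpa [sphericalCoords, hz] using Complex.norm_mul_cos_arg z
    · simpa [sphericalCoords, hz] using Complex.norm_mul_sin_arg z
    · simpa [sphericalCoords] using sin_arcsin (abs_le.1 ht).1 (abs_le.1 ht).2

theorem hausdorffMeasure_two_sphere_lt_top :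
    μH[2] (sphere (0 : EuclideanSpace ℝ (Fin 3)) 1) < ⊤ := by
  have h := (isCompact_Icc.prod isCompact_Icc : IsCompact (Icc (-π) π ×ˢ Icc (-π) π)
    ).hausdorffMeasure_image_lt_top_of_contDiff contDiff_sphericalCoords
  rw [Module.finrank_prod, Module.finrank_self] at h
  exact (measure_mono sphere_subset_image_sphericalCoords).trans_lt (by exact_mod_cast h)

instance : IsFiniteMeasure
    ((μH[2] : Measure (EuclideanSpace ℝ (Fin 3))).restrict (sphere 0 1)) :=
  isFiniteMeasure_restrict.2 hausdorffMeasure_two_sphere_lt_top.ne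

lemma continuous_max_zero_rpow {p : ℝ} (hp : 0 ≤ p) : Continuous fun x : ℝ => max 0 x ^ p :=
  (continuous_const.max continuous_id : Continuous fun x : ℝ => max 0 x).rpow_const
    fun _ => Or.inr hp

theorem hasDerivAt_max_zero_rpow {m : ℝ} (hm : 1 < m) (x : ℝ) :
    HasDerivAt (fun y => max 0 y ^ m) (m * max 0 x ^ (m - 1)) x := by
  have hm1 : 0 < m - 1 := sub_pos.2 hm
  have off_zero : ∀ y ≠ (0 : ℝ),
      HasDerivAt (fun y => max 0 y ^ m) (m * max 0 y ^ (m - 1)) y := by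
    intro y hy
    rcases hy.lt_or_gt with hy | hy
    · have hloc : (fun y : ℝ => max 0 y ^ m) =ᶠ[𝓝 y] fun _ => 0 := by
        filter_upwards [eventually_lt_nhds hy] with z hz
        rw [max_eq_left hz.le, zero_rpow (by linarith)]
      rw [max_eq_left hy.le, zero_rpow hm1.ne', mul_zero]
      exact (hasDerivAt_const y 0).congr_of_eventuallyEq hloc
    · have hloc : (fun y : ℝ => max 0 y ^ m) =ᶠ[𝓝 y] fun z => z ^ m := by
        filter_upwards [eventually_gt_nhds hy] with z hz
        rw [max_eq_right hz.le]
      rw [max_eq_right hy.le]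
      exact (hasDerivAt_rpow_const (Or.inl hy.ne')).congr_of_eventuallyEq hloc
  rcases eq_or_ne x 0 with rfl | hx
  · exact hasDerivAt_of_hasDerivAt_of_ne off_zero
      (continuous_max_zero_rpow (by linarith)).continuousAt
      (continuous_const.mul (continuous_max_zero_rpow hm1.le)).continuousAt
  · exact off_zero x hx

section ParametricIntegral

variable {α V : Type*} [MeasurableSpace α] {μ : Measure α}
  [NormedAddCommGroup V] [NormedSpace ℝ V] {L : α → V →L[ℝ] ℝ} {K : ℝ}

lemma exists_ae_bound_comp_apply {β : Type*} [SeminormedAddCommGroup β]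
    (hL : ∀ᵐ a ∂μ, ‖L a‖ ≤ K) {h : ℝ → β} (hh : Continuous h) (v₀ : V) :
    ∃ C, ∀ᵐ a ∂μ, ∀ v ∈ ball v₀ 1, ‖h (L a v)‖ ≤ C := by
  obtain ⟨C, hC⟩ := isCompact_Icc.exists_bound_of_continuousOn
    (hh.continuousOn (s := Icc (-(K * (‖v₀‖ + 1))) (K * (‖v₀‖ + 1))))
  refine ⟨C, ?_⟩
  filter_upwards [hL] with a ha v hv
  have hv' : ‖v‖ ≤ ‖v₀‖ + 1 := by
    have := norm_le_norm_add_norm_sub' v v₀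
    rw [mem_ball, dist_eq_norm] at hv
    linarith
  refine hC _ (abs_le.1 ?_)
  calc |L a v| ≤ ‖L a‖ * ‖v‖ := (L a).le_opNorm v
    _ ≤ K * (‖v₀‖ + 1) := mul_le_mul ha hv' (norm_nonneg v) ((norm_nonneg _).trans ha)

lemma exists_ae_bound_smul_of_comp_apply (hL : ∀ᵐ a ∂μ, ‖L a‖ ≤ K) {h : ℝ → ℝ}
    (hh : Continuous h) (v₀ : V) :
    ∃ C, ∀ᵐ a ∂μ, ∀ v ∈ ball v₀ 1, ‖h (L a v) • L a‖ ≤ C := by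
  obtain ⟨C, hC⟩ := exists_ae_bound_comp_apply hL hh v₀
  refine ⟨C * K, ?_⟩
  filter_upwards [hC, hL] with a hCa ha v hv
  rw [norm_smul]
  exact mul_le_mul (hCa v hv) ha (norm_nonneg _) ((norm_nonneg _).trans (hCa v hv))

lemma MeasureTheory.AEStronglyMeasurable.comp_clm_apply (hL_meas : AEStronglyMeasurable L μ) {h : ℝ → ℝ}
    (hh : Continuous h) (v : V) : AEStronglyMeasurable (fun a => h (L a v)) μ :=
  (hh.comp (ContinuousLinearMap.apply ℝ ℝ v).continuous).comp_aestronglyMeasurable hL_meas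

variable [IsFiniteMeasure μ] {g g' : ℝ → ℝ}

theorem hasFDerivAt_integral_comp_clm_apply (hg : ∀ x, HasDerivAt g (g' x) x)
    (hg' : Continuous g') (hL_meas : AEStronglyMeasurable L μ) (hL : ∀ᵐ a ∂μ, ‖L a‖ ≤ K)
    (v₀ : V) :
    HasFDerivAt (fun v => ∫ a, g (L a v) ∂μ) (∫ a, g' (L a v₀) • L a ∂μ) v₀ := by
  have hg_cont : Continuous g := continuous_iff_continuousAt.2 fun x => (hg x).continuousAt
  obtain ⟨C₀, hC₀⟩ := exists_ae_bound_comp_apply hL hg_cont v₀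
  obtain ⟨C, hC⟩ := exists_ae_bound_smul_of_comp_apply hL hg' v₀
  refine hasFDerivAt_integral_of_dominated_of_fderiv_le (ball_mem_nhds v₀ one_pos)
    (.of_forall (hL_meas.comp_clm_apply hg_cont))
    (.of_bound (hL_meas.comp_clm_apply hg_cont v₀) C₀
      (hC₀.mono fun a ha => ha v₀ (mem_ball_self one_pos)))
    ((hL_meas.comp_clm_apply hg' v₀).smul hL_meas) hC (integrable_const C) (.of_forall fun a v _ => ?_)
  exact (hg _).comp_hasFDerivAt v (L a).hasFDerivAt

theorem contDiff_integral_comp_clm_apply (hg : ∀ x, HasDerivAt g (g' x) x)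
    (hg' : Continuous g') (hL_meas : AEStronglyMeasurable L μ) (hL : ∀ᵐ a ∂μ, ‖L a‖ ≤ K) :
    ContDiff ℝ 1 (fun v => ∫ a, g (L a v) ∂μ) := by
  refine contDiff_one_iff_hasFDerivAt.2 ⟨_, continuous_iff_continuousAt.2 fun v₀ => ?_,
    hasFDerivAt_integral_comp_clm_apply hg hg' hL_meas hL⟩
  obtain ⟨C, hC⟩ := exists_ae_bound_smul_of_comp_apply hL hg' v₀
  exact continuousAt_of_dominated
    (.of_forall fun v => (hL_meas.comp_clm_apply hg' v).smul hL_meas)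
    (eventually_of_mem (ball_mem_nhds v₀ one_pos) fun v hv => hC.mono fun a ha => ha v hv)
    (integrable_const C)
    (.of_forall fun a => ((hg'.comp (L a).continuous).smul continuous_const).continuousAt)

theorem fderiv_integral_comp_clm_apply (hg : ∀ x, HasDerivAt g (g' x) x)
    (hg' : Continuous g') (hL_meas : AEStronglyMeasurable L μ) (hL : ∀ᵐ a ∂μ, ‖L a‖ ≤ K)
    (v₀ w : V) :
    fderiv ℝ (fun v => ∫ a, g (L a v) ∂μ) v₀ w = ∫ a, g' (L a v₀) * L a w ∂μ := by
  obtain ⟨C, hC⟩ := exists_ae_bound_smul_of_comp_apply hL hg' v₀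
  have h_int : Integrable (fun a => g' (L a v₀) • L a) μ :=
    .of_bound ((hL_meas.comp_clm_apply hg' v₀).smul hL_meas) C
      (hC.mono fun a ha => ha v₀ (mem_ball_self one_pos))
  rw [(hasFDerivAt_integral_comp_clm_apply hg hg' hL_meas hL v₀).fderiv,
    ContinuousLinearMap.integral_apply h_int]
  rfl

end ParametricIntegral

section InnerApplySelf

variable {E : Type*} [NormedAddCommGroup E] [InnerProductSpace ℝ E]

noncomputable def innerApplySelfCLM (n : E) : (E →L[ℝ] E) →L[ℝ] ℝ :=
  ((innerSL ℝ).flip n).comp (ContinuousLinearMap.apply ℝ E n)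

@[simp]
lemma innerApplySelfCLM_apply (n : E) (σ : E →L[ℝ] E) :
    innerApplySelfCLM n σ = ⟪σ n, n⟫_ℝ :=
  rfl

lemma continuous_innerApplySelfCLM : Continuous (innerApplySelfCLM (E := E)) :=
  (innerSL ℝ).flip.continuous.clm_comp (ContinuousLinearMap.apply ℝ E).continuous

lemma norm_innerApplySelfCLM_le (n : E) : ‖innerApplySelfCLM n‖ ≤ ‖n‖ ^ 2 :=
  ContinuousLinearMap.opNorm_le_bound _ (by positivity) fun σ =>
    calc |⟪σ n, n⟫_ℝ| ≤ ‖σ n‖ * ‖n‖ := abs_real_inner_le_norm _ _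
      _ ≤ ‖σ‖ * ‖n‖ * ‖n‖ := by gcongr; exact σ.le_opNorm n
      _ = ‖n‖ ^ 2 * ‖σ‖ := by ring

end InnerApplySelf

/-- The ceramic reliability integrand `𝓕^cer(σ) = ∫_{S²} ((max{0, nᵀσn})/σ_c)^m dS(n)`
(integral over the unit sphere with its 2-dimensional Hausdorff surface measure) is
continuously Fréchet differentiable for `m > 1`, with derivative at `σ₀` in direction `M`
given by `∫_{S²} m (max{0, nᵀσ₀n})^{m−1} (nᵀMn) / σ_c^m dS(n)`; in particular the
integrand's derivative vanishes wherever `nᵀσ₀n ≤ 0`. -/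
theorem stmt_19 (m σc : ℝ) (hm : 1 < m) (hσc : 0 < σc)
    (F : (EuclideanSpace ℝ (Fin 3) →L[ℝ] EuclideanSpace ℝ (Fin 3)) → ℝ)
    (hF : ∀ σ : EuclideanSpace ℝ (Fin 3) →L[ℝ] EuclideanSpace ℝ (Fin 3),
      F σ = ∫ n in Metric.sphere (0 : EuclideanSpace ℝ (Fin 3)) 1,
        (max 0 (inner ℝ (σ n) n : ℝ) / σc) ^ m ∂(μH[2])) :
    ContDiff ℝ 1 F ∧
    ∀ (σ₀ M : EuclideanSpace ℝ (Fin 3) →L[ℝ] EuclideanSpace ℝ (Fin 3)),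
      fderiv ℝ F σ₀ M = ∫ n in Metric.sphere (0 : EuclideanSpace ℝ (Fin 3)) 1,
        m * (max 0 (inner ℝ (σ₀ n) n : ℝ)) ^ (m - 1) * (inner ℝ (M n) n : ℝ) / σc ^ m ∂(μH[2]) := by
  have hL : ∀ᵐ n ∂(μH[2] : Measure (EuclideanSpace ℝ (Fin 3))).restrict (sphere 0 1),
      ‖innerApplySelfCLM n‖ ≤ 1 := by
    filter_upwards [ae_restrict_mem isClosed_sphere.measurableSet] with n hn
    simpa [mem_sphere_zero_iff_norm.mp hn] using norm_innerApplySelfCLM_le n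
  have hL_meas : AEStronglyMeasurable innerApplySelfCLM
      ((μH[2] : Measure (EuclideanSpace ℝ (Fin 3))).restrict (sphere 0 1)) :=
    continuous_innerApplySelfCLM.aestronglyMeasurable
  have hg : ∀ x, HasDerivAt (fun y => (max 0 y / σc) ^ m) (m * max 0 x ^ (m - 1) / σc ^ m) x :=
    fun x => ((hasDerivAt_max_zero_rpow hm x).div_const (σc ^ m)).congr_of_eventuallyEq
      (.of_forall fun y => div_rpow (le_max_left 0 y) hσc.le m)
  have hg' : Continuous fun x => m * max 0 x ^ (m - 1) / σc ^ m :=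
    (continuous_const.mul (continuous_max_zero_rpow (by linarith))).div_const _
  obtain rfl : F = fun σ => ∫ n in sphere 0 1, (max 0 (innerApplySelfCLM n σ) / σc) ^ m ∂μH[2] :=
    funext hF
  refine ⟨contDiff_integral_comp_clm_apply hg hg' hL_meas hL, fun σ₀ M => ?_⟩
  rw [fderiv_integral_comp_clm_apply hg hg' hL_meas hL]
  congr 1 with n
  simp only [innerApplySelfCLM_apply]
  ring
end
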